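/- Let Φ denote the standard normal CDF and fix c ≤ 0. The function g : (-1,1) → ℝ defined by g(ρ) = ∫_{-∞}^{c} φ(η) Φ(-(ρ/√(1-ρ²)) η) dη, where φ is the standard normal density, is strictly increasing in ρ. -/
import Mathlib


open MeasureTheory

/-- The standard normal density. -/
noncomputable def phi (x : ℝ) : ℝ := Real.exp (-x ^ 2 / 2) / Real.sqrt (2 * Real.pi)

/-- The standard normal cumulative distribution function. -/
noncomputable def Phi (x : ℝ) : ℝ := ∫ t in Set.Iic x, phi t

lemma phi_pos (x : ℝ) : 0 < phi x :=
  div_pos (Real.exp_pos _) (Real.sqrt_pos.mpr (by positivity))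

lemma integrable_phi : Integrable phi := by
  have h := (integrable_exp_neg_mul_sq (by norm_num : (0:ℝ) < 1/2)).div_const
    (Real.sqrt (2 * Real.pi))
  have : phi = fun x => Real.exp (-(1/2) * x ^ 2) / Real.sqrt (2 * Real.pi) := by
    funext x; unfold phi; rw [show ∀ x:ℝ, (-(1/2):ℝ) * x ^ 2 = -x ^ 2 / 2 from fun x => by ring]
  rw [this]; exact h

lemma Phi_mono : Monotone Phi := by
  intro x y hxy
  exact setIntegral_mono_set integrable_phi.integrableOn
    (Filter.Eventually.of_forall fun t => (phi_pos t).le)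
    (HasSubset.Subset.eventuallyLE (Set.Iic_subset_Iic.mpr hxy))

lemma Phi_strictMono : StrictMono Phi := by
  intro x y hxy
  have hsplit : Phi y = Phi x + ∫ t in Set.Ioc x y, phi t := by
    rw [Phi, Phi, ← setIntegral_union (Set.Iic_disjoint_Ioc le_rfl) measurableSet_Ioc
      integrable_phi.integrableOn integrable_phi.integrableOn,
      Set.Iic_union_Ioc_eq_Iic hxy.le]
  have hpos : 0 < ∫ t in Set.Ioc x y, phi t := by
    rw [setIntegral_pos_iff_support_of_nonneg_ae
      (Filter.Eventually.of_forall fun t => (phi_pos t).le) integrable_phi.integrableOn]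
    have : Function.support phi = Set.univ := by
      ext t; simp [Function.mem_support, (phi_pos t).ne']
    rw [this, Set.univ_inter, Real.volume_Ioc]
    simpa using hxy
  linarith

lemma Phi_nonneg (x : ℝ) : 0 ≤ Phi x :=
  setIntegral_nonneg measurableSet_Iic fun t _ => (phi_pos t).le

lemma Phi_le (x : ℝ) : Phi x ≤ ∫ t, phi t :=
  setIntegral_le_integral integrable_phi
    (Filter.Eventually.of_forall fun t => (phi_pos t).le)

lemma measurable_Phi : Measurable Phi := Phi_mono.measurable

lemma integrable_aux (k c : ℝ) :
    IntegrableOn (fun η => phi η * Phi (k * η)) (Set.Iic c) := by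
  apply Integrable.integrableOn
  apply Integrable.mono' (integrable_phi.mul_const (∫ t, phi t))
  · exact ((Continuous.measurable (by unfold phi; fun_prop)).mul
      (measurable_Phi.comp (measurable_const_mul k))).aestronglyMeasurable
  · refine Filter.Eventually.of_forall fun η => ?_
    rw [Real.norm_eq_abs, abs_of_nonneg (mul_nonneg (phi_pos η).le (Phi_nonneg _))]
    exact mul_le_mul_of_nonneg_left (Phi_le _) (phi_pos η).le

lemma r_strictMonoOn : ∀ a b : ℝ, -1 < a → b < 1 → a < b →
    a / Real.sqrt (1 - a ^ 2) < b / Real.sqrt (1 - b ^ 2) := by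
  have key : ∀ a b : ℝ, 0 ≤ a → a < b → b < 1 →
      a / Real.sqrt (1 - a ^ 2) < b / Real.sqrt (1 - b ^ 2) := by
    intro a b ha hab hb1
    have ha2 : (0:ℝ) < 1 - a ^ 2 := by nlinarith
    have hb2 : (0:ℝ) < 1 - b ^ 2 := by nlinarith
    rw [div_lt_div_iff₀ (Real.sqrt_pos.mpr ha2) (Real.sqrt_pos.mpr hb2)]
    have h1 : (a * Real.sqrt (1 - b ^ 2)) ^ 2 < (b * Real.sqrt (1 - a ^ 2)) ^ 2 := by
      rw [mul_pow, mul_pow, Real.sq_sqrt hb2.le, Real.sq_sqrt ha2.le]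
      nlinarith
    exact lt_of_pow_lt_pow_left₀ 2 (mul_nonneg (by linarith) (Real.sqrt_nonneg _)) h1
  intro a b ha1 hb1 hab
  rcases le_or_gt 0 a with ha | ha
  · exact key a b ha hab hb1
  · rcases le_or_gt 0 b with hb | hb
    · have : a / Real.sqrt (1 - a ^ 2) < 0 :=
        div_neg_of_neg_of_pos ha (Real.sqrt_pos.mpr (by nlinarith))
      have hb2 : 0 ≤ b / Real.sqrt (1 - b ^ 2) :=
        div_nonneg hb (Real.sqrt_nonneg _)
      linarith
    · have := key (-b) (-a) (by linarith) (by linarith) (by linarith)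
      have e1 : (-b) ^ 2 = b ^ 2 := by ring
      have e2 : (-a) ^ 2 = a ^ 2 := by ring
      rw [e1, e2, neg_div, neg_div] at this
      linarith

/-- For `c ≤ 0`, the function
`ρ ↦ ∫_{-∞}^{c} φ(η) Φ(-(ρ/√(1-ρ²)) η) dη` is strictly increasing on `(-1, 1)`.
(Theorem 6(a), key monotonicity step.) -/
theorem stmt_4 (c : ℝ) (hc : c ≤ 0) :
    StrictMonoOn
      (fun ρ : ℝ => ∫ η in Set.Iic c, phi η * Phi (-(ρ / Real.sqrt (1 - ρ ^ 2)) * η))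
      (Set.Ioo (-1 : ℝ) 1) := by
  intro a ha b hb hab
  set ka := -(a / Real.sqrt (1 - a ^ 2)) with hka
  set kb := -(b / Real.sqrt (1 - b ^ 2)) with hkb
  have hk : kb < ka := neg_lt_neg (r_strictMonoOn a b ha.1 hb.2 hab)
  have hInta := integrable_aux ka c
  have hIntb := integrable_aux kb c
  have hnn : (0 : ℝ → ℝ) ≤ᵐ[volume.restrict (Set.Iic c)]
      fun η => phi η * Phi (kb * η) - phi η * Phi (ka * η) := by
    rw [Filter.EventuallyLE, ae_restrict_iff' measurableSet_Iic]
    refine Filter.Eventually.of_forall fun η hη => ?_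
    have hη0 : η ≤ 0 := le_trans hη hc
    have hle : ka * η ≤ kb * η := mul_le_mul_of_nonpos_right hk.le hη0
    simpa using mul_le_mul_of_nonneg_left (Phi_mono hle) (phi_pos η).le
  have hdiff : 0 < ∫ η in Set.Iic c, (phi η * Phi (kb * η) - phi η * Phi (ka * η)) := by
    refine (setIntegral_pos_iff_support_of_nonneg_ae hnn (hIntb.sub hInta)).mpr ?_
    refine lt_of_lt_of_le ?_ (measure_mono (s := Set.Iio c) ?_)
    · rw [Real.volume_Iio]; exact ENNReal.zero_lt_top
    · intro η hη
      have hη0 : η < 0 := lt_of_lt_of_le hη hc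
      have hlt : ka * η < kb * η := mul_lt_mul_of_neg_right hk hη0
      have hpp : phi η * Phi (ka * η) < phi η * Phi (kb * η) :=
        mul_lt_mul_of_pos_left (Phi_strictMono hlt) (phi_pos η)
      exact ⟨by simpa [Function.mem_support] using (sub_pos.mpr hpp).ne', (Set.mem_Iio.mp hη).le⟩
  have hsub := integral_sub hIntb hInta
  simp only
  rw [← hka, ← hkb]
  rw [hsub] at hdiff
  linarith
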